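/- Fix d ≥ 1 and D = {0,…,d}. Let A ∈ ℝ^{m×n} with m ≤ 3. If A has no forbidden pattern, then A is universally connected. -/

import Mathlib

open Matrix Finset
open scoped Classical

/-- `A` has a forbidden pattern: there are `lam ≥ 1` rows and columns, with
orderings (injective enumerations) `r`, `c`, such that in column `c l` all rows
of the pattern other than `r l`, `r (l+1)` vanish (cyclically), and
`A (r l) (c l) * A (r (l+1)) (c l) < 0` for every `l`. -/
def HasFP {m n : ℕ} (A : Matrix (Fin m) (Fin n) ℝ) : Prop :=
  ∃ lam : ℕ, ∃ r : Fin (lam + 1) → Fin m, ∃ c : Fin (lam + 1) → Fin n,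
    Function.Injective r ∧ Function.Injective c ∧
    (∀ l k : Fin (lam + 1), k ≠ l → k ≠ l + 1 → A (r k) (c l) = 0) ∧
    (∀ l : Fin (lam + 1), A (r l) (c l) * A (r (l + 1)) (c l) < 0)

/-- `A`, restricted to the set `S` of remaining columns, can be eliminated at column `j`. -/
def CanElim {m n : ℕ} (A : Matrix (Fin m) (Fin n) ℝ) (S : Finset (Fin n)) (j : Fin n) : Prop :=
  (∀ i, 0 < A i j → ∀ j' ∈ S, j' ≠ j → A i j' = 0) ∨
  (∀ i, A i j < 0 → ∀ j' ∈ S, j' ≠ j → A i j' = 0)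

/-- `A` has an elimination ordering. -/
def HasEO {m n : ℕ} (A : Matrix (Fin m) (Fin n) ℝ) : Prop :=
  ∃ e : Fin n ≃ Fin n, ∀ t : Fin n,
    CanElim A (Finset.univ.filter fun c => ∀ s : Fin n, s < t → e s ≠ c) (e t)

/-- `x ∈ {0,…,d}ⁿ` is a feasible solution of the integer linear system `A x ≥ b`. -/
def Feas {m n : ℕ} (d : ℕ) (A : Matrix (Fin m) (Fin n) ℝ) (b : Fin m → ℝ)
    (x : Fin n → ℕ) : Prop :=
  (∀ j, x j ≤ d) ∧ ∀ i, b i ≤ ∑ j, A i j * (x j : ℝ)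

/-- Adjacency in the solution graph `G(A,b)`: both endpoints are feasible and
their Hamming distance is `1`. -/
def SGAdj {m n : ℕ} (d : ℕ) (A : Matrix (Fin m) (Fin n) ℝ) (b : Fin m → ℝ)
    (x y : Fin n → ℕ) : Prop :=
  Feas d A b x ∧ Feas d A b y ∧ hammingDist x y = 1

/-- The solution graph `G(A,b)` is connected. -/
def SGConn {m n : ℕ} (d : ℕ) (A : Matrix (Fin m) (Fin n) ℝ) (b : Fin m → ℝ) : Prop :=
  ∀ x y : Fin n → ℕ, Feas d A b x → Feas d A b y →
    Relation.ReflTransGen (SGAdj d A b) x y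

/-- `A` is universally connected. -/
def UnivConn {m n : ℕ} (d : ℕ) (A : Matrix (Fin m) (Fin n) ℝ) : Prop :=
  ∀ b : Fin m → ℝ, SGConn d A b

/-!
With at most three rows and no forbidden pattern, every nonempty set `S` of columns contains a
column `j` that can be eliminated: all rows with a positive (or all rows with a negative) entry in
column `j` vanish on the rest of `S`. Otherwise, chasing the rows that block the columns of `S`
yields either two rows of opposite signs in two different columns, or three rows that are pairwise
of opposite signs in three different columns, and either configuration is a forbidden pattern.

For such a column `j` and feasible `x`, `y` agreeing off `S`, replacing both `x j` and `y j` by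
`min (x j) (y j)` (resp. `max`) keeps both points feasible, and they now agree off `S \ {j}`;
induction on `S` connects `x` to `y`.
-/

section Patterns

variable {m n : ℕ} {A : Matrix (Fin m) (Fin n) ℝ}

def OppositeAt (A : Matrix (Fin m) (Fin n) ℝ) (a b : Fin m) (p : Fin n) : Prop :=
  A a p * A b p < 0

namespace OppositeAt

variable {a b c : Fin m} {p q : Fin n}

theorem symm (h : OppositeAt A a b p) : OppositeAt A b a p := by
  rwa [OppositeAt, mul_comm]

theorem ne (h : OppositeAt A a b p) : a ≠ b := by
  rintro rfl; exact (mul_self_nonneg _).not_gt h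

theorem left_ne_zero (h : OppositeAt A a b p) : A a p ≠ 0 := by
  intro h0; simp [OppositeAt, h0] at h

theorem right_ne_zero (h : OppositeAt A a b p) : A b p ≠ 0 :=
  h.symm.left_ne_zero

theorem left_or_right (h : OppositeAt A a b p) (hc : A c p ≠ 0) :
    OppositeAt A c a p ∨ OppositeAt A c b p := by
  unfold OppositeAt at *
  by_contra! hnn
  have : 0 < A c p * A c p := mul_self_pos.mpr hc
  nlinarith [mul_nonneg hnn.1 hnn.2]

end OppositeAt

theorem hasFP_of_oppositeAt_of_oppositeAt {a b : Fin m} {p q : Fin n} (hpq : p ≠ q)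
    (hp : OppositeAt A a b p) (hq : OppositeAt A a b q) : HasFP A := by
  refine ⟨1, ![a, b], ![p, q], ?_, ?_, ?_, ?_⟩
  · intro i j hij; fin_cases i <;> fin_cases j <;> simp_all [hp.ne, hp.ne.symm]
  · intro i j hij; fin_cases i <;> fin_cases j <;> simp_all [hpq.symm]
  · intro l k h1 h2; fin_cases l <;> fin_cases k <;> simp_all
  · intro l; fin_cases l
    · exact hp
    · exact hq.symm

theorem hasFP_of_oppositeAt_cycle {a b c : Fin m} {p q s : Fin n}
    (hab : OppositeAt A a b p) (hbc : OppositeAt A b c q) (hca : OppositeAt A c a s)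
    (hcp : A c p = 0) (haq : A a q = 0) (hbs : A b s = 0) : HasFP A := by
  have hpq : p ≠ q := by rintro rfl; exact hbc.right_ne_zero hcp
  have hqs : q ≠ s := by rintro rfl; exact hca.right_ne_zero haq
  have hps : p ≠ s := by rintro rfl; exact hab.right_ne_zero hbs
  refine ⟨2, ![a, b, c], ![p, q, s], ?_, ?_, ?_, ?_⟩
  · intro i j hij
    fin_cases i <;> fin_cases j <;>
      simp_all [hab.ne, hbc.ne, hca.ne, hab.ne.symm, hbc.ne.symm, hca.ne.symm]
  · intro i j hij; fin_cases i <;> fin_cases j <;> simp_all [hpq.symm, hqs.symm, hps.symm]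
  · intro l k g1 g2; fin_cases l <;> fin_cases k <;> simp_all
  · intro l; fin_cases l
    · exact hab
    · exact hbc
    · exact hca

theorem eq_zero_of_oppositeAt_cycle (hA : ¬ HasFP A) {a b c : Fin m} {p q s : Fin n}
    (hab : OppositeAt A a b p) (hbc : OppositeAt A b c q) (hca : OppositeAt A c a s)
    (hpq : p ≠ q) (hsp : s ≠ p) : A c p = 0 := by
  by_contra hc
  rcases hab.left_or_right hc with hcap | hcbp
  · exact hA (hasFP_of_oppositeAt_of_oppositeAt hsp hca hcap)
  · exact hA (hasFP_of_oppositeAt_of_oppositeAt hpq hcbp.symm hbc)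

theorem hasFP_of_oppositeAt_triangle {a b c : Fin m} {p q s : Fin n}
    (hab : OppositeAt A a b p) (hbc : OppositeAt A b c q) (hca : OppositeAt A c a s)
    (hpq : p ≠ q) (hqs : q ≠ s) (hsp : s ≠ p) : HasFP A := by
  by_contra hA
  exact hA <| hasFP_of_oppositeAt_cycle hab hbc hca
    (eq_zero_of_oppositeAt_cycle hA hab hbc hca hpq hsp)
    (eq_zero_of_oppositeAt_cycle hA hbc hca hab hqs hpq)
    (eq_zero_of_oppositeAt_cycle hA hca hab hbc hsp hqs)

theorem Fin.eq_or_eq_or_eq_of_le_three (hm : m ≤ 3) {a b c : Fin m}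
    (hab : a ≠ b) (hac : a ≠ c) (hbc : b ≠ c) (x : Fin m) : x = a ∨ x = b ∨ x = c := by
  have h3 := card_eq_three.mpr ⟨a, b, c, hab, hac, hbc, rfl⟩
  have hle := card_le_univ ({a, b, c} : Finset (Fin m))
  have hx := mem_univ x
  rw [← eq_univ_of_card {a, b, c} (by simp only [h3, Fintype.card_fin] at hle ⊢; omega)] at hx
  simpa using hx

section Elimination

variable {S : Finset (Fin n)} {j : Fin n}

theorem exists_ne_zero_of_not_canElim (h : ¬ CanElim A S j) :
    ∃ x, A x j ≠ 0 ∧ ∃ j' ∈ S, j' ≠ j ∧ A x j' ≠ 0 := by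
  simp only [CanElim, not_or, not_forall] at h
  obtain ⟨⟨x, hx, j', hj', hne, hx'⟩, -⟩ := h
  exact ⟨x, hx.ne', j', hj', hne, hx'⟩

theorem exists_oppositeAt_of_not_canElim (h : ¬ CanElim A S j) {x : Fin m} (hx : A x j ≠ 0) :
    ∃ y, OppositeAt A x y j ∧ ∃ j' ∈ S, j' ≠ j ∧ A y j' ≠ 0 := by
  simp only [CanElim, not_or, not_forall] at h
  obtain ⟨⟨u, hu, j₁, hj₁, hne₁, hu'⟩, ⟨v, hv, j₂, hj₂, hne₂, hv'⟩⟩ := h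
  rcases hx.lt_or_gt with hneg | hpos
  · exact ⟨u, mul_neg_of_neg_of_pos hneg hu, j₁, hj₁, hne₁, hu'⟩
  · exact ⟨v, mul_neg_of_pos_of_neg hpos hv, j₂, hj₂, hne₂, hv'⟩

end Elimination

theorem exists_canElim_of_not_hasFP (hm : m ≤ 3) (hA : ¬ HasFP A) {S : Finset (Fin n)}
    (hS : S.Nonempty) : ∃ j ∈ S, CanElim A S j := by
  by_contra! hblocked
  have next {x : Fin m} {p : Fin n} (hp : p ∈ S) (hx : A x p ≠ 0) :=
    exists_oppositeAt_of_not_canElim (hblocked p hp) hx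
  have two {x y : Fin m} {p q : Fin n} (hpq : p ≠ q) (hp : OppositeAt A x y p)
      (hq : OppositeAt A x y q) : False :=
    hA (hasFP_of_oppositeAt_of_oppositeAt hpq hp hq)
  obtain ⟨j₀, hj₀⟩ := hS
  obtain ⟨a, ha, ja, hja, hjaj₀, haja⟩ := exists_ne_zero_of_not_canElim (hblocked j₀ hj₀)
  obtain ⟨b, hab, jb, hjb, hjbj₀, hbjb⟩ := next hj₀ ha
  obtain ⟨c, hac, jc, hjc, hjcja, hcjc⟩ := next hja haja
  obtain ⟨w, hcw, -⟩ := next hjc hcjc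
  have hbc : b ≠ c := by rintro rfl; exact two hjaj₀ hac hab
  have row := Fin.eq_or_eq_or_eq_of_le_three hm hab.ne hac.ne hbc
  obtain rfl : w = b := by
    rcases row w with rfl | rfl | rfl
    · exact (two hjcja.symm hac hcw.symm).elim
    · rfl
    · exact (hcw.ne rfl).elim
  by_cases hjcj₀ : jc = j₀
  -- `b` is opposite to both other rows at `j₀`, so the row blocking `b` at `jb` repeats a pair
  · subst hjcj₀
    obtain ⟨z, hbz, -⟩ := next hjb hbjb
    rcases row z with rfl | rfl | rfl
    · exact two hjbj₀ hbz.symm hab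
    · exact hbz.ne rfl
    · exact two hjbj₀ hbz hcw.symm
  · exact hA (hasFP_of_oppositeAt_triangle hab hcw.symm hac.symm (Ne.symm hjcj₀) hjcja hjaj₀)

end Patterns

section Connectivity

variable {m n : ℕ} {A : Matrix (Fin m) (Fin n) ℝ} {b : Fin m → ℝ} {d : ℕ}
  {x y : Fin n → ℕ} {S : Finset (Fin n)} {j : Fin n}

theorem sum_mul_update (a : Fin n → ℝ) (t : ℕ) :
    ∑ k, a k * (Function.update x j t k : ℝ) = ∑ k, a k * x k + a j * (t - x j) := by
  rw [← sub_eq_iff_eq_add', ← sum_sub_distrib, sum_eq_single j]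
  · simp [mul_sub]
  · intro k _ hk
    simp [hk]
  · simp

theorem Feas.update_of_rows_vanish (hx : Feas d A b x) (hy : Feas d A b y) (hj : j ∈ S)
    (hxy : ∀ k ∉ S, x k = y k) {t : ℕ} (ht : t = x j ∨ t = y j)
    (hrows : ∀ i, A i j * t < A i j * x j → ∀ k ∈ S, k ≠ j → A i k = 0) :
    Feas d A b (Function.update x j t) := by
  refine ⟨fun k => ?_, fun i => ?_⟩
  · rcases eq_or_ne k j with rfl | hk
    · rcases ht with rfl | rfl <;> simp [hx.1, hy.1]
    · simpa [hk] using hx.1 k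
  rw [sum_mul_update]
  by_cases hi : A i j * t < A i j * x j
  -- a row that decreases vanishes on `S \ {j}`, so after the update it takes its value at `y`
  · obtain rfl : t = y j := ht.resolve_left (by rintro rfl; exact hi.false)
    have hdiff : ∑ k, A i k * y k - ∑ k, A i k * x k = A i j * (y j - x j) := by
      rw [← sum_sub_distrib, sum_eq_single j (fun k _ hk => ?_) (by simp), mul_sub]
      by_cases hkS : k ∈ S
      · simp [hrows i hi k hkS hk]
      · simp [hxy k hkS]
    linarith [hy.2 i]
  · linarith [hx.2 i]

theorem CanElim.exists_feas_update (h : CanElim A S j) (hj : j ∈ S) (hx : Feas d A b x)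
    (hy : Feas d A b y) (hxy : ∀ k ∉ S, x k = y k) :
    ∃ t, Feas d A b (Function.update x j t) ∧ Feas d A b (Function.update y j t) := by
  have hyx : ∀ k ∉ S, y k = x k := fun k hk => (hxy k hk).symm
  rcases h with hpos | hneg
  · have pos {a s u : ℝ} (h : a * s < a * u) (hsu : s ≤ u) : 0 < a := by nlinarith
    refine ⟨min (x j) (y j), hx.update_of_rows_vanish hy hj hxy (min_choice _ _) ?_,
      min_comm (x j) (y j) ▸ hy.update_of_rows_vanish hx hj hyx (min_choice _ _) ?_⟩ <;>
    · intro i hi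
      exact hpos i (pos hi (by exact_mod_cast min_le_left _ _))
  · have neg {a s u : ℝ} (h : a * s < a * u) (hsu : u ≤ s) : a < 0 := by nlinarith
    refine ⟨max (x j) (y j), hx.update_of_rows_vanish hy hj hxy (max_choice _ _) ?_,
      max_comm (x j) (y j) ▸ hy.update_of_rows_vanish hx hj hyx (max_choice _ _) ?_⟩ <;>
    · intro i hi
      exact hneg i (neg hi (by exact_mod_cast le_max_left _ _))

instance : Std.Symm (SGAdj d A b) :=
  ⟨fun _ _ ⟨hx, hy, h⟩ => ⟨hy, hx, by rwa [hammingDist_comm]⟩⟩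

theorem reflTransGen_sgAdj_update (hx : Feas d A b x) {t : ℕ}
    (hxt : Feas d A b (Function.update x j t)) :
    Relation.ReflTransGen (SGAdj d A b) x (Function.update x j t) := by
  rcases eq_or_ne t (x j) with rfl | ht
  · rw [Function.update_eq_self]
  refine .single ⟨hx, hxt, ?_⟩
  have : ({k | x k ≠ Function.update x j t k} : Finset (Fin n)) = {j} := by
    ext k
    rcases eq_or_ne k j with rfl | hk
    · simpa using ht.symm
    · simp [hk]
  rw [hammingDist, this, card_singleton]

theorem reflTransGen_sgAdj_of_eq_off
    (helim : ∀ S : Finset (Fin n), S.Nonempty → ∃ j ∈ S, CanElim A S j)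
    (S : Finset (Fin n)) :
    ∀ x y, Feas d A b x → Feas d A b y → (∀ k ∉ S, x k = y k) →
      Relation.ReflTransGen (SGAdj d A b) x y := by
  induction S using Finset.strongInduction with
  | H S ih =>
    intro x y hx hy hxy
    rcases S.eq_empty_or_nonempty with rfl | hS
    · obtain rfl : x = y := funext fun k => hxy k (notMem_empty k)
      rfl
    obtain ⟨j, hj, hcan⟩ := helim S hS
    obtain ⟨t, hxt, hyt⟩ := hcan.exists_feas_update hj hx hy hxy
    have hxyt : ∀ k ∉ S.erase j, Function.update x j t k = Function.update y j t k := by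
      intro k hk
      rcases eq_or_ne k j with rfl | hkj
      · simp
      · simpa [hkj] using hxy k (by simpa [hkj] using hk)
    exact (reflTransGen_sgAdj_update hx hxt).trans <|
      (ih _ (erase_ssubset hj) _ _ hxt hyt hxyt).trans (symm (reflTransGen_sgAdj_update hy hyt))

theorem univConn_of_forall_exists_canElim
    (helim : ∀ S : Finset (Fin n), S.Nonempty → ∃ j ∈ S, CanElim A S j) : UnivConn d A :=
  fun _ x y hx hy => reflTransGen_sgAdj_of_eq_off helim univ x y hx hy (by simp)

end Connectivity

theorem stmt14_general {m n : ℕ} (d : ℕ) (hm : m ≤ 3)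
    (A : Matrix (Fin m) (Fin n) ℝ) (h : ¬ HasFP A) : UnivConn d A :=
  univConn_of_forall_exists_canElim fun _ hS => exists_canElim_of_not_hasFP hm h hS

theorem stmt14 {m n : ℕ} (d : ℕ) (hd : 1 ≤ d) (hm : m ≤ 3)
    (A : Matrix (Fin m) (Fin n) ℝ) (h : ¬ HasFP A) : UnivConn d A :=
  stmt14_general d hm A h
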